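/- For every a > 0 and every EVEN integer n ≥ 4, the function F(u) = −a²·cosh(au)/sinh²(au) (defined for real u ≠ 0), which is the hyperbolic degeneration of the new solutions of Byatt-Smith and Braden, satisfies the classical functional equation: T_n(F, x) = 0 for all pairwise distinct real x₁, …, xₙ. -/

import Mathlib

open Polynomial Finset

lemma derivative_finset_prod {ι : Type*} [DecidableEq ι] (s : Finset ι) (f : ι → ℝ[X]) :
    derivative (∏ m ∈ s, f m) = ∑ k ∈ s, (∏ m ∈ s.erase k, f m) * derivative (f k) := by
  induction s using Finset.induction_on with
  | empty => simp
  | insert a s ha ih =>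
    rw [Finset.prod_insert ha, derivative_mul, ih, Finset.sum_insert ha,
      Finset.erase_insert ha, Finset.mul_sum]
    congr 1
    · ring
    refine Finset.sum_congr rfl fun k hk => ?_
    rw [Finset.erase_insert_of_ne (by rintro rfl; exact ha hk), Finset.prod_insert
      (fun h => ha (Finset.mem_of_mem_erase h))]
    ring

section Core
variable {n : ℕ} (ν : ℕ) (y : Fin n → ℝ)

/-- `W j = ∏_{m≠j} (X - y m)²`. -/
noncomputable def Wp (j : Fin n) : ℝ[X] := ∏ m ∈ univ.erase j, (X - C (y m)) ^ 2

/-- `L = X^ν ∏_m (X + y m)`. -/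
noncomputable def Lq : ℝ[X] := X ^ ν * ∏ m, (X + C (y m))

noncomputable def ad (j : Fin n) : ℝ := (Lq ν y).eval (y j) / (Wp y j).eval (y j)

noncomputable def bd (j : Fin n) : ℝ :=
  ((Lq ν y).derivative.eval (y j) - ad ν y j * (Wp y j).derivative.eval (y j))
    / (Wp y j).eval (y j)

variable (hy : Function.Injective y)

include hy in
lemma Wp_eval_self_ne_zero (j : Fin n) : (Wp y j).eval (y j) ≠ 0 := by
  rw [Wp, eval_prod]
  refine Finset.prod_ne_zero_iff.2 fun m hm => ?_
  have : y j ≠ y m := fun h => (Finset.ne_of_mem_erase hm).symm (hy h.symm).symm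
  simp only [eval_pow, eval_sub, eval_X, eval_C]
  exact pow_ne_zero _ (sub_ne_zero.2 this)

omit hy in
lemma Wp_eval_of_ne {i j : Fin n} (hij : i ≠ j) : (Wp y j).eval (y i) = 0 := by
  rw [Wp, eval_prod]
  refine Finset.prod_eq_zero (Finset.mem_erase.2 ⟨hij, Finset.mem_univ i⟩) ?_
  simp

omit hy in
lemma Wp_deriv_eval_of_ne {i j : Fin n} (hij : i ≠ j) :
    (Wp y j).derivative.eval (y i) = 0 := by
  have hmem : i ∈ univ.erase j := Finset.mem_erase.2 ⟨hij, Finset.mem_univ i⟩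
  rw [Wp, ← Finset.mul_prod_erase _ _ hmem, derivative_mul]
  simp [eval_add, eval_mul, derivative_pow]

include hy in
lemma sum_bd_eq_zero (hν : ν + 1 < n) : ∑ j, bd ν y j = 0 := by
  classical
  have hn2 : 2 ≤ n := by omega
  have hw := Wp_eval_self_ne_zero y hy
  set L := Lq ν y with hLdef
  set P : ℝ[X] :=
    ∑ j, (C (ad ν y j) * Wp y j + C (bd ν y j) * ((X - C (y j)) * Wp y j)) with hPdef
  -- W j is monic of degree 2(n-1)
  have hWmon : ∀ j, (Wp y j).Monic := fun j =>
    monic_prod_of_monic _ _ fun m _ => (monic_X_sub_C (y m)).pow 2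
  have hWdeg : ∀ j : Fin n, (Wp y j).natDegree = 2 * (n - 1) := by
    intro j
    rw [Wp, natDegree_prod_of_monic _ _ fun m _ => (monic_X_sub_C (y m)).pow 2]
    simp only [natDegree_pow, natDegree_X_sub_C, mul_one]
    rw [Finset.sum_const, Finset.card_erase_of_mem (Finset.mem_univ j), Finset.card_univ,
      Fintype.card_fin, smul_eq_mul, mul_comm]
  have hLdeg : L.natDegree ≤ ν + n := by
    refine le_trans natDegree_mul_le (add_le_add (natDegree_X_pow ν).le ?_)
    refine le_trans (natDegree_prod_le _ _) ?_
    calc ∑ m : Fin n, (X + C (y m)).natDegree ≤ ∑ _m : Fin n, 1 := by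
          exact Finset.sum_le_sum fun m _ => (natDegree_X_add_C (y m)).le
      _ = n := by simp
  -- evaluation of P agrees with L at each node
  have hPeval : ∀ i, P.eval (y i) = L.eval (y i) := by
    intro i
    rw [hPdef, eval_finset_sum, Finset.sum_eq_single i]
    · simp only [eval_add, eval_mul, eval_C, eval_sub, eval_X, sub_self, zero_mul, mul_zero,
        add_zero]
      rw [ad, div_mul_cancel₀ _ (hw i)]
    · intro j _ hj
      simp [eval_add, eval_mul, Wp_eval_of_ne y (Ne.symm hj)]
    · exact fun h => absurd (Finset.mem_univ i) h
  -- derivative of P agrees with derivative of L at each node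
  have hPdeval : ∀ i, P.derivative.eval (y i) = L.derivative.eval (y i) := by
    intro i
    rw [hPdef, derivative_sum, eval_finset_sum, Finset.sum_eq_single i]
    · rw [derivative_add, derivative_C_mul, derivative_C_mul, derivative_mul,
        derivative_X_sub_C, one_mul]
      simp only [eval_add, eval_mul, eval_C, eval_sub, eval_X, sub_self, zero_mul, add_zero]
      have hb : bd ν y i * (Wp y i).eval (y i)
          = L.derivative.eval (y i) - ad ν y i * (Wp y i).derivative.eval (y i) := by
        rw [bd, div_mul_cancel₀ _ (hw i)]
      ring_nf
      ring_nf at hb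
      linarith [hb]
    · intro j _ hj
      rw [derivative_add, derivative_C_mul, derivative_C_mul, derivative_mul,
        derivative_X_sub_C, one_mul]
      simp [eval_add, eval_mul, Wp_eval_of_ne y (Ne.symm hj), Wp_deriv_eval_of_ne y (Ne.symm hj)]
    · exact fun h => absurd (Finset.mem_univ i) h
  -- each (X - y i)² divides L - P
  have hdvd2 : ∀ i, ((X - C (y i)) ^ 2 : ℝ[X]) ∣ L - P := by
    intro i
    have hroot : (L - P).eval (y i) = 0 := by rw [eval_sub, hPeval i, sub_self]
    obtain ⟨g, hg⟩ := dvd_iff_isRoot.2 hroot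
    have hg0 : g.eval (y i) = 0 := by
      have hder : (L - P).derivative.eval (y i) = 0 := by
        rw [derivative_sub, eval_sub, hPdeval i, sub_self]
      rw [hg, derivative_mul, derivative_X_sub_C, one_mul] at hder
      simpa using hder
    obtain ⟨h, hh⟩ := dvd_iff_isRoot.2 hg0
    exact ⟨h, by rw [hg, hh]; ring⟩
  have hbig : (∏ i, ((X - C (y i)) ^ 2 : ℝ[X])) ∣ L - P := by
    refine Finset.prod_dvd_of_coprime ?_ fun i _ => hdvd2 i
    exact fun i _ j _ hij => (Polynomial.pairwise_coprime_X_sub_C hy hij).pow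
  have hbigdeg : (∏ i, ((X - C (y i)) ^ 2 : ℝ[X])).natDegree = 2 * n := by
    rw [natDegree_prod_of_monic _ _ fun m _ => (monic_X_sub_C (y m)).pow 2]
    simp [natDegree_pow, mul_comm]
  have hPdeg : P.natDegree ≤ 2 * n - 1 := by
    refine natDegree_sum_le_of_forall_le _ _ fun j _ => ?_
    refine le_trans (natDegree_add_le _ _) (max_le ?_ ?_)
    · refine le_trans natDegree_mul_le ?_
      rw [natDegree_C, hWdeg j]; omega
    · refine le_trans natDegree_mul_le ?_
      rw [natDegree_C]
      refine le_trans (by simp : (0:ℕ) + ((X - C (y j)) * Wp y j).natDegree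
        ≤ ((X - C (y j)) * Wp y j).natDegree) ?_
      rw [(monic_X_sub_C (y j)).natDegree_mul (hWmon j), natDegree_X_sub_C, hWdeg j]; omega
  have hLP : L = P := by
    by_contra hne
    have hne' : L - P ≠ 0 := sub_ne_zero.2 hne
    have := Polynomial.natDegree_le_of_dvd hbig hne'
    rw [hbigdeg] at this
    have h2 : (L - P).natDegree ≤ 2 * n - 1 := by
      refine le_trans (natDegree_sub_le _ _) (max_le (le_trans hLdeg (by omega)) hPdeg)
    omega
  -- compare coefficients in degree 2n - 1
  have h1 : L.coeff (2 * n - 1) = 0 :=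
    coeff_eq_zero_of_natDegree_lt (lt_of_le_of_lt hLdeg (by omega))
  have h2 : P.coeff (2 * n - 1) = ∑ j, bd ν y j := by
    rw [hPdef, finset_sum_coeff]
    refine Finset.sum_congr rfl fun j _ => ?_
    rw [coeff_add, coeff_C_mul, coeff_C_mul]
    have hV : ((X - C (y j)) * Wp y j).Monic := (monic_X_sub_C (y j)).mul (hWmon j)
    have hVdeg : ((X - C (y j)) * Wp y j).natDegree = 2 * n - 1 := by
      rw [(monic_X_sub_C (y j)).natDegree_mul (hWmon j), natDegree_X_sub_C, hWdeg j]; omega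
    rw [coeff_eq_zero_of_natDegree_lt (by rw [hWdeg j]; omega), mul_zero, zero_add,
      ← hVdeg, hV.coeff_natDegree, mul_one]
  rw [← h2, ← hLP, h1]

include hy in
lemma inner_eq_neg_bd (hν : 1 ≤ ν) (hn : n = 2 * ν + 2) (hpos : ∀ i, 0 < y i) (j : Fin n) :
    ∑ l ∈ univ.erase j, (y j) ^ ν * ((y j ^ 2 + 6 * y j * y l + y l ^ 2) / (y j - y l) ^ 3)
      * ∏ m ∈ (univ.erase j).erase l, ((y j + y m) / (y j - y m) ^ 2)
    = - bd ν y j := by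
  classical
  have hdne : ∀ m ∈ (univ : Finset (Fin n)).erase j, y j - y m ≠ 0 := fun m hm =>
    sub_ne_zero.2 fun h => (Finset.ne_of_mem_erase hm) (hy h.symm)
  have hsne : ∀ m : Fin n, y j + y m ≠ 0 := fun m =>
    ne_of_gt (by have := hpos j; have := hpos m; linarith)
  set E := (univ : Finset (Fin n)).erase j with hE
  set Pa := ∏ m ∈ E, (y j + y m) with hPa
  set Pw := ∏ m ∈ E, (y j - y m) ^ 2 with hPw
  have hPwne : Pw ≠ 0 := Finset.prod_ne_zero_iff.2 fun m hm => pow_ne_zero _ (hdne m hm)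
  set A := y j ^ ν * Pa with hA
  -- evaluation of W at y j
  have hwj : (Wp y j).eval (y j) = Pw := by
    rw [Wp, eval_prod, hPw]
    exact Finset.prod_congr rfl fun m _ => by simp
  -- evaluation of L at y j
  have hLj : (Lq ν y).eval (y j) = 2 * y j * A := by
    rw [Lq, eval_mul, eval_pow, eval_X, eval_prod,
      ← Finset.mul_prod_erase _ _ (mem_univ j)]
    simp only [eval_add, eval_X, eval_C, ← hE]
    rw [hA, hPa]; ring
  -- evaluation of W' at y j
  have hWd : (Wp y j).derivative.eval (y j)
      = ∑ k ∈ E, (2 * (y j - y k)) * (∏ m ∈ E.erase k, (y j - y m) ^ 2) := by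
    rw [Wp, derivative_finset_prod, eval_finset_sum]
    simp only [← hE]
    refine Finset.sum_congr rfl fun k hk => ?_
    rw [derivative_pow, derivative_X_sub_C, eval_mul, eval_prod]
    simp only [eval_mul, eval_C, eval_pow, eval_sub, eval_X, eval_one, mul_one, pow_one,
      Nat.cast_ofNat]
    ring
  -- evaluation of the full product ∏ (X + y m) and its derivative at y j
  have hprodall : eval (y j) (∏ m, (X + C (y m)) : ℝ[X]) = 2 * y j * Pa := by
    rw [eval_prod, ← Finset.mul_prod_erase _ _ (mem_univ j)]
    simp only [eval_add, eval_X, eval_C, ← hE]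
    rw [hPa]; ring
  have hder : eval (y j) (derivative (∏ m, (X + C (y m)) : ℝ[X]))
      = Pa + ∑ k ∈ E, 2 * y j * ∏ m ∈ E.erase k, (y j + y m) := by
    rw [derivative_finset_prod, eval_finset_sum, ← Finset.add_sum_erase _ _ (mem_univ j)]
    simp only [← hE]
    congr 1
    · simp only [derivative_add, derivative_X, derivative_C, add_zero, eval_mul, eval_one,
        mul_one, eval_prod, eval_add, eval_X, eval_C, ← hE]
      exact hPa.symm
    · refine Finset.sum_congr rfl fun k hk => ?_
      have hkj : j ∈ (univ : Finset (Fin n)).erase k :=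
        Finset.mem_erase.2 ⟨(Finset.ne_of_mem_erase hk).symm, mem_univ j⟩
      rw [derivative_add, derivative_X, derivative_C, add_zero, eval_mul, eval_one, mul_one,
        eval_prod, ← Finset.mul_prod_erase _ _ hkj]
      simp only [eval_add, eval_X, eval_C]
      rw [Finset.erase_right_comm]
      simp only [← hE]
      ring
  -- evaluation of L' at y j
  have hyν : y j ^ (ν - 1) * y j = y j ^ ν := by
    rw [← pow_succ]; congr 1; omega
  have hLd : (Lq ν y).derivative.eval (y j)
      = (2 * (ν : ℝ) + 1) * A + ∑ k ∈ E, 2 * y j * y j ^ ν * ∏ m ∈ E.erase k, (y j + y m) := by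
    rw [Lq, derivative_mul, derivative_X_pow]
    simp only [eval_add, eval_mul, eval_C, eval_pow, eval_X]
    rw [hprodall, hder, hA, mul_add, Finset.mul_sum]
    have hsum : ∑ k ∈ E, y j ^ ν * (2 * y j * ∏ m ∈ E.erase k, (y j + y m))
        = ∑ k ∈ E, 2 * y j * y j ^ ν * ∏ m ∈ E.erase k, (y j + y m) :=
      Finset.sum_congr rfl fun k _ => by ring
    rw [hsum]
    linear_combination (2 * (ν : ℝ) * Pa) * hyν
  -- the termwise partial-fraction rewriting
  have hterm : ∀ l ∈ E,
      (y j) ^ ν * ((y j ^ 2 + 6 * y j * y l + y l ^ 2) / (y j - y l) ^ 3)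
        * ∏ m ∈ E.erase l, ((y j + y m) / (y j - y m) ^ 2)
      = (A / Pw) * (4 * y j / (y j - y l) - 2 * y j / (y j + y l) - 1) := by
    intro l hl
    have hd := hdne l hl
    have hs := hsne l
    have hprodne : ∏ x ∈ E.erase l, (y j - y x) ^ 2 ≠ 0 :=
      Finset.prod_ne_zero_iff.2 fun m hm => pow_ne_zero _ (hdne m (Finset.mem_of_mem_erase hm))
    have hP : ∏ m ∈ E.erase l, ((y j + y m) / (y j - y m) ^ 2)
        = Pa / Pw * ((y j - y l) ^ 2 / (y j + y l)) := by
      rw [Finset.prod_div_distrib, hPa, hPw,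
        ← Finset.mul_prod_erase E (fun m => (y j + y m)) hl,
        ← Finset.mul_prod_erase E (fun m => (y j - y m) ^ 2) hl]
      field_simp
    rw [hP, hA]
    field_simp
    ring
  rw [Finset.sum_congr rfl hterm]
  -- now compute bd explicitly
  have hbd : bd ν y j * Pw = (Lq ν y).derivative.eval (y j)
      - ad ν y j * (Wp y j).derivative.eval (y j) := by
    rw [bd, hwj, div_mul_cancel₀ _ hPwne]
  have had : ad ν y j = 2 * y j * A / Pw := by rw [ad, hLj, hwj]
  have haW : ad ν y j * (Wp y j).derivative.eval (y j)
      = ∑ k ∈ E, 4 * y j * A / (y j - y k) := by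
    rw [hWd, had, Finset.mul_sum]
    refine Finset.sum_congr rfl fun k hk => ?_
    have hd := hdne k hk
    have hsplit : (y j - y k) ^ 2 * ∏ m ∈ E.erase k, (y j - y m) ^ 2 = Pw := by
      rw [hPw]; exact Finset.mul_prod_erase E (fun m => (y j - y m) ^ 2) hk
    have hrest : ∏ m ∈ E.erase k, (y j - y m) ^ 2 = Pw / (y j - y k) ^ 2 := by
      rw [← hsplit]; field_simp
    rw [hrest]
    field_simp
    ring
  have hLsum : ∀ k ∈ E, 2 * y j * y j ^ ν * ∏ m ∈ E.erase k, (y j + y m)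
      = 2 * y j * A / (y j + y k) := by
    intro k hk
    have hs := hsne k
    have hsplit : (y j + y k) * ∏ m ∈ E.erase k, (y j + y m) = Pa := by
      rw [hPa]; exact Finset.mul_prod_erase E (fun m => (y j + y m)) hk
    have hrest : ∏ m ∈ E.erase k, (y j + y m) = Pa / (y j + y k) := by
      rw [← hsplit]; field_simp
    rw [hrest, hA]
    field_simp
  have hbd2 : bd ν y j = ((2 * (ν : ℝ) + 1) * A
      + ∑ k ∈ E, (2 * y j * A / (y j + y k) - 4 * y j * A / (y j - y k))) / Pw := by
    rw [eq_div_iff hPwne, hbd, hLd, haW, Finset.sum_congr rfl hLsum, Finset.sum_sub_distrib]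
    ring
  rw [hbd2]
  have hcard : (E.card : ℝ) = (n : ℝ) - 1 := by
    rw [hE, Finset.card_erase_of_mem (mem_univ j), Finset.card_univ, Fintype.card_fin]
    have h1 : 1 ≤ n := by omega
    push_cast [Nat.cast_sub h1]
    ring
  -- final algebra
  have hfinal : ∀ l ∈ E, (A / Pw) * (4 * y j / (y j - y l) - 2 * y j / (y j + y l) - 1)
      = (4 * y j * A / (y j - y l) - 2 * y j * A / (y j + y l)) / Pw - A / Pw :=
    fun l _ => by ring
  rw [Finset.sum_congr rfl hfinal, Finset.sum_sub_distrib, ← Finset.sum_div, Finset.sum_const,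
    nsmul_eq_mul]
  have hneg : ∑ k ∈ E, (2 * y j * A / (y j + y k) - 4 * y j * A / (y j - y k))
      = - ∑ l ∈ E, (4 * y j * A / (y j - y l) - 2 * y j * A / (y j + y l)) := by
    rw [← Finset.sum_neg_distrib]
    exact Finset.sum_congr rfl fun k _ => by ring
  rw [hneg]
  have hncast : (n : ℝ) = 2 * (ν : ℝ) + 2 := by rw [hn]; push_cast; ring
  rw [hcard, hncast]
  ring

end Core

lemma keyS {n : ℕ} (ν : ℕ) (hν : 1 ≤ ν) (hn : n = 2 * ν + 2) (y : Fin n → ℝ)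
    (hy : Function.Injective y) (hpos : ∀ i, 0 < y i) :
    ∑ j, ∑ l ∈ univ.erase j, (y j) ^ ν * ((y j ^ 2 + 6 * y j * y l + y l ^ 2) / (y j - y l) ^ 3)
      * ∏ m ∈ (univ.erase j).erase l, ((y j + y m) / (y j - y m) ^ 2) = 0 := by
  rw [Finset.sum_congr rfl fun j _ => inner_eq_neg_bd ν y hy hν hn hpos j,
    Finset.sum_neg_distrib, sum_bd_eq_zero ν y hy (by omega), neg_zero]

/-- Derivative of the hyperbolic solution away from the singularity. -/
lemma deriv_F (a : ℝ) {u : ℝ} (hu : a * u ≠ 0) :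
    deriv (fun u => -a ^ 2 * Real.cosh (a * u) / Real.sinh (a * u) ^ 2) u
      = a ^ 3 * (1 + Real.cosh (a * u) ^ 2) / Real.sinh (a * u) ^ 3 := by
  have hs : Real.sinh (a * u) ≠ 0 := Real.sinh_ne_zero.2 hu
  have hlin : HasDerivAt (fun v : ℝ => a * v) a u := by
    simpa using (hasDerivAt_id u).const_mul a
  have h1 : HasDerivAt (fun v : ℝ => Real.sinh (a * v)) (Real.cosh (a * u) * a) u :=
    (Real.hasDerivAt_sinh (a * u)).comp u hlin
  have h2 : HasDerivAt (fun v : ℝ => Real.cosh (a * v)) (Real.sinh (a * u) * a) u :=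
    (Real.hasDerivAt_cosh (a * u)).comp u hlin
  have hnum : HasDerivAt (fun v : ℝ => -a ^ 2 * Real.cosh (a * v))
      (-a ^ 2 * (Real.sinh (a * u) * a)) u := h2.const_mul _
  have hden : HasDerivAt (fun v : ℝ => Real.sinh (a * v) ^ 2)
      (2 * Real.sinh (a * u) ^ 1 * (Real.cosh (a * u) * a)) u := h1.pow 2
  have hden' : Real.sinh (a * u) ^ 2 ≠ 0 := pow_ne_zero _ hs
  have hdiv := hnum.div hden hden'
  rw [HasDerivAt.deriv (f := fun u => -a ^ 2 * Real.cosh (a * u) / Real.sinh (a * u) ^ 2) hdiv]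
  have hc : Real.cosh (a * u) ^ 2 = 1 + Real.sinh (a * u) ^ 2 := by
    have := Real.cosh_sq (a * u); linarith
  field_simp
  linear_combination a ^ 3 * hc

/-- The classical sum `T_n(F, x) = ∑_j ∑_{l ≠ j} F′(x_j − x_l) ∏_{m ≠ j,l} F(x_j − x_m)`. -/
noncomputable def classicalSumR (F : ℝ → ℝ) (n : ℕ) (x : Fin n → ℝ) : ℝ :=
  ∑ j : Fin n, ∑ l ∈ Finset.univ.erase j,
    deriv F (x j - x l) * ∏ m ∈ (Finset.univ.erase j).erase l, F (x j - x m)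

/-- For every `a > 0` and every even `n ≥ 4`, the hyperbolic degeneration
`F(u) = −a²·cosh(au)/sinh²(au)` of the new solutions of Byatt-Smith and Braden
satisfies the classical functional equation `T_n(F, x) = 0` for pairwise distinct
real `x₁, …, xₙ`. -/
theorem classicalSum_new_solution_even (a : ℝ) (ha : 0 < a) (n : ℕ) (hn : 4 ≤ n)
    (heven : Even n) (x : Fin n → ℝ) (hx : Function.Injective x) :
    classicalSumR (fun u => -a ^ 2 * Real.cosh (a * u) / (Real.sinh (a * u)) ^ 2) n x = 0 := by
  classical
  obtain ⟨k, hk⟩ := heven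
  set ν : ℕ := k - 1 with hνdef
  have hν : 1 ≤ ν := by omega
  have hn2 : n = 2 * ν + 2 := by omega
  set F : ℝ → ℝ := fun u => -a ^ 2 * Real.cosh (a * u) / (Real.sinh (a * u)) ^ 2 with hF
  set e : Fin n → ℝ := fun j => Real.exp (a * x j) with he
  set y : Fin n → ℝ := fun j => (e j) ^ 2 with hydef
  have hy2 : ∀ i, y i = e i ^ 2 := fun _ => rfl
  have hepos : ∀ j, 0 < e j := fun j => Real.exp_pos _
  have hene : ∀ j, e j ≠ 0 := fun j => ne_of_gt (hepos j)
  have hypos : ∀ j, 0 < y j := fun j => pow_pos (hepos j) 2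
  have heinj : Function.Injective e := by
    intro i j hij
    have h1 : a * x i = a * x j := Real.exp_injective hij
    exact hx (mul_left_cancel₀ (ne_of_gt ha) h1)
  have hyinj : Function.Injective y := by
    intro i j hij
    refine heinj ?_
    have h0 : (e i - e j) * (e i + e j) = 0 := by
      have := hy2 i ▸ hy2 j ▸ hij
      nlinarith [this]
    rcases mul_eq_zero.1 h0 with h | h
    · linarith [sub_eq_zero.1 h]
    · exfalso; have := hepos i; have := hepos j; linarith
  have hyne : ∀ i m : Fin n, i ≠ m → y i - y m ≠ 0 :=
    fun i m him => sub_ne_zero.2 fun h => him (hyinj h)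
  have hyadd : ∀ i m : Fin n, y i + y m ≠ 0 :=
    fun i m => ne_of_gt (by have := hypos i; have := hypos m; linarith)
  have heval : ∀ i : Fin n, Real.exp (a * x i) = e i := fun i => rfl
  -- hyperbolic functions in exponential variables
  have hsinh : ∀ i m : Fin n, Real.sinh (a * (x i - x m)) = (y i - y m) / (2 * (e i * e m)) := by
    intro i m
    rw [Real.sinh_eq, mul_sub, neg_sub, Real.exp_sub, Real.exp_sub]
    simp only [heval, hy2]
    have h2 := hene i; have h3 := hene m
    field_simp
  have hcosh : ∀ i m : Fin n, Real.cosh (a * (x i - x m)) = (y i + y m) / (2 * (e i * e m)) := by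
    intro i m
    rw [Real.cosh_eq, mul_sub, neg_sub, Real.exp_sub, Real.exp_sub]
    simp only [heval, hy2]
    have h2 := hene i; have h3 := hene m
    field_simp
  -- value of F at differences
  have hFval : ∀ i m : Fin n, i ≠ m →
      F (x i - x m) = -(2 * a ^ 2) * e i * (e m * ((y i + y m) / (y i - y m) ^ 2)) := by
    intro i m him
    simp only [hF]
    rw [hsinh, hcosh]
    have h1 := hyne i m him
    have h2 := hene i; have h3 := hene m
    simp only [hy2] at h1 ⊢
    field_simp
  -- value of F' at differences
  have hF'val : ∀ i m : Fin n, i ≠ m →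
      deriv F (x i - x m)
        = 2 * a ^ 3 * (e i * e m) * ((y i ^ 2 + 6 * y i * y m + y m ^ 2) / (y i - y m) ^ 3) := by
    intro i m him
    have hxne : x i - x m ≠ 0 := sub_ne_zero.2 fun h => him (hx h)
    have hne : a * (x i - x m) ≠ 0 := mul_ne_zero (ne_of_gt ha) hxne
    rw [hF, deriv_F a hne, hsinh, hcosh]
    have h1 := hyne i m him
    have h2 := hene i; have h3 := hene m
    simp only [hy2] at h1 ⊢
    field_simp
    ring
  -- collapse the product
  have hprod : ∀ j : Fin n, ∀ l ∈ (univ : Finset (Fin n)).erase j,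
      ∏ m ∈ (univ.erase j).erase l, F (x j - x m)
        = (-(2 * a ^ 2) * e j) ^ (n - 2) * ((∏ m ∈ (univ.erase j).erase l, e m)
            * ∏ m ∈ (univ.erase j).erase l, ((y j + y m) / (y j - y m) ^ 2)) := by
    intro j l hl
    have hcongr : ∀ m ∈ ((univ : Finset (Fin n)).erase j).erase l, F (x j - x m)
        = (-(2 * a ^ 2) * e j) * (e m * ((y j + y m) / (y j - y m) ^ 2)) := by
      intro m hm
      have hmj : j ≠ m := fun h => (Finset.ne_of_mem_erase (Finset.mem_of_mem_erase hm)) h.symm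
      rw [hFval j m hmj]
    rw [Finset.prod_congr rfl hcongr, Finset.prod_mul_distrib, Finset.prod_mul_distrib,
      Finset.prod_mul_distrib, Finset.prod_const, Finset.prod_const,
      Finset.card_erase_of_mem hl, Finset.card_erase_of_mem (mem_univ j),
      Finset.card_univ, Fintype.card_fin, show n - 1 - 1 = n - 2 from by omega]
    ring
  set K : ℝ := 2 * a ^ 3 * (2 * a ^ 2) ^ (n - 2) * ∏ m, e m with hK
  have hterm : ∀ j : Fin n, ∀ l ∈ (univ : Finset (Fin n)).erase j,
      deriv F (x j - x l) * ∏ m ∈ (univ.erase j).erase l, F (x j - x m)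
        = K * ((y j) ^ ν * ((y j ^ 2 + 6 * y j * y l + y l ^ 2) / (y j - y l) ^ 3)
            * ∏ m ∈ (univ.erase j).erase l, ((y j + y m) / (y j - y m) ^ 2)) := by
    intro j l hl
    have hjl : j ≠ l := (Finset.ne_of_mem_erase hl).symm
    rw [hF'val j l hjl, hprod j l hl]
    have hsplit : ∏ m, e m = e j * (e l * ∏ m ∈ (univ.erase j).erase l, e m) := by
      rw [← Finset.mul_prod_erase univ e (mem_univ j),
        ← Finset.mul_prod_erase (univ.erase j) e hl]
    have hneg : (-(2 * a ^ 2) * e j) ^ (n - 2) = (2 * a ^ 2) ^ (n - 2) * e j ^ (n - 2) := by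
      rw [mul_pow, Even.neg_pow ⟨ν, by omega⟩]
    have hpow : e j ^ (n - 2) = y j ^ ν := by
      rw [show n - 2 = 2 * ν from by omega, pow_mul, ← hy2 j]
    rw [hK, hsplit, hneg, hpow]
    ring
  rw [classicalSumR]
  rw [Finset.sum_congr rfl fun j _ => Finset.sum_congr rfl (hterm j)]
  simp only [← Finset.mul_sum]
  rw [keyS ν hν hn2 y hyinj hypos, mul_zero]
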